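/- arXiv:2510.02725 — 3 statements merged into one kernel-verified Lean document; each statement's English description precedes it below -/
import Mathlib

section
/- Let G be a graph on n vertices and let (π, B) be any embedding of V(G) into the leaves of a rooted binary tree B. Then the congestion cng_{π,B}(G), defined as the maximum over nodes S of B of e_G(π⁻¹(S), complement), satisfies cng_{π,B}(G) ≥ (2/9)·λ₂(G)·n. -/
open Matrix SimpleGraph

/-- Multiset of eigenvalues (with multiplicity) of a real symmetric matrix. -/
noncomputable def specM {ι : Type*} [Fintype ι] [DecidableEq ι] (M : Matrix ι ι ℝ) :
    Multiset ℝ := by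
  classical exact if h : M.IsHermitian then Finset.univ.val.map h.eigenvalues else 0

/-- Eigenvalues sorted in increasing order. -/
noncomputable def sortedSpec {ι : Type*} [Fintype ι] [DecidableEq ι] (M : Matrix ι ι ℝ) :
    List ℝ := (specM M).sort (· ≤ ·)

/-- Number of cut edges between `S` and its complement (each edge counted once,
ordered with its `S`-endpoint first). -/
def cutSize {n : ℕ} (G : SimpleGraph (Fin n)) [DecidableRel G.Adj] (S : Finset (Fin n)) : ℕ :=
  (Finset.univ.filter fun e : Fin n × Fin n => G.Adj e.1 e.2 ∧ e.1 ∈ S ∧ e.2 ∉ S).card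

/-- A rooted binary tree with leaves labeled by `α`: every internal node has
exactly two children. -/
inductive BTree (α : Type) where
  | leaf : α → BTree α
  | node : BTree α → BTree α → BTree α

/-- The list of leaf labels of a binary tree. -/
def BTree.leaves {α : Type} : BTree α → List α
  | .leaf a => [a]
  | .node l r => l.leaves ++ r.leaves

/-- The set of labels of the leaves below a node of the tree. -/
def BTree.labels {α : Type} [DecidableEq α] : BTree α → Finset α
  | .leaf a => {a}
  | .node l r => l.labels ∪ r.labels

/-- All nodes (subtrees) of a binary tree. -/
def BTree.subtrees {α : Type} : BTree α → List (BTree α)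
  | .leaf a => [.leaf a]
  | .node l r => .node l r :: (l.subtrees ++ r.subtrees)

/-- `BTree.OccAt root t d` : `t` is a node of `root` at distance `d` from the root. -/
inductive BTree.OccAt {α : Type} (root : BTree α) : BTree α → ℕ → Prop where
  | refl : BTree.OccAt root root 0
  | left {l r : BTree α} {d : ℕ} :
      BTree.OccAt root (.node l r) d → BTree.OccAt root l (d + 1)
  | right {l r : BTree α} {d : ℕ} :
      BTree.OccAt root (.node l r) d → BTree.OccAt root r (d + 1)

/-- The congestion of the leaf-embedding given by the binary tree `T`:
the maximum cut size `e_G(S, V∖S)` over all nodes `S` of `T`. -/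
def cng {n : ℕ} (G : SimpleGraph (Fin n)) [DecidableRel G.Adj] (T : BTree (Fin n)) : ℕ :=
  ((T.subtrees).map fun t => cutSize G t.labels).foldr max 0


set_option linter.unusedSectionVars false

section TreeAux

open Finset

variable {α : Type} [DecidableEq α]

lemma BTree.labels_eq_toFinset (t : BTree α) : t.labels = t.leaves.toFinset := by
  induction t with
  | leaf a => simp [BTree.labels, BTree.leaves]
  | node l r ihl ihr => simp [BTree.labels, BTree.leaves, ihl, ihr]

lemma BTree.one_le_length_leaves (t : BTree α) : 1 ≤ t.leaves.length := by
  induction t with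
  | leaf a => simp [BTree.leaves]
  | node l r ihl ihr => simp [BTree.leaves]; omega

lemma BTree.card_labels (t : BTree α) (h : t.leaves.Nodup) :
    t.labels.card = t.leaves.length := by
  rw [BTree.labels_eq_toFinset, List.toFinset_card_of_nodup h]

lemma BTree.mem_subtrees_left {l r t : BTree α} (h : t ∈ l.subtrees) :
    t ∈ (BTree.node l r).subtrees := by
  simp [BTree.subtrees]; tauto

lemma BTree.mem_subtrees_right {l r t : BTree α} (h : t ∈ r.subtrees) :
    t ∈ (BTree.node l r).subtrees := by
  simp [BTree.subtrees]; tauto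

lemma exists_balanced {n : ℕ} (hn : 2 ≤ n) :
    ∀ (t : BTree (Fin n)), t.leaves.Nodup → n ≤ 3 * t.labels.card → t.labels.card ≤ n →
    ∃ t' ∈ t.subtrees, n ≤ 3 * t'.labels.card ∧ 3 * t'.labels.card ≤ 2 * n := by
  intro t
  induction t with
  | leaf a =>
    intro _ h1 _
    refine ⟨BTree.leaf a, by simp [BTree.subtrees], h1, ?_⟩
    have : (BTree.leaf a : BTree (Fin n)).labels.card = 1 := by
      simp [BTree.labels]
    omega
  | node l r ihl ihr =>
    intro hnd h1 h2
    by_cases hbal : 3 * (BTree.node l r).labels.card ≤ 2 * n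
    · exact ⟨BTree.node l r, by simp [BTree.subtrees], h1, hbal⟩
    · push_neg at hbal
      have hnd' : (l.leaves ++ r.leaves).Nodup := hnd
      have hl : l.leaves.Nodup := hnd'.of_append_left
      have hr : r.leaves.Nodup := hnd'.of_append_right
      have hdisj : Disjoint l.labels r.labels := by
        rw [BTree.labels_eq_toFinset, BTree.labels_eq_toFinset,
          List.disjoint_toFinset_iff_disjoint]
        exact List.disjoint_of_nodup_append hnd'
      have hcard : (BTree.node l r).labels.card = l.labels.card + r.labels.card := by
        show (l.labels ∪ r.labels).card = _
        rw [Finset.card_union_of_disjoint hdisj]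
      have hl1 : 1 ≤ l.labels.card := by
        rw [BTree.card_labels l hl]; exact l.one_le_length_leaves
      have hr1 : 1 ≤ r.labels.card := by
        rw [BTree.card_labels r hr]; exact r.one_le_length_leaves
      rcases le_total r.labels.card l.labels.card with hle | hle
      · obtain ⟨t', ht', h3, h4⟩ := ihl hl (by omega) (by omega)
        exact ⟨t', BTree.mem_subtrees_left ht', h3, h4⟩
      · obtain ⟨t', ht', h3, h4⟩ := ihr hr (by omega) (by omega)
        exact ⟨t', BTree.mem_subtrees_right ht', h3, h4⟩

lemma le_foldr_max_of_mem {a : ℕ} {L : List ℕ} (h : a ∈ L) : a ≤ L.foldr max 0 := by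
  induction L with
  | nil => simp at h
  | cons b L ih =>
    rcases List.mem_cons.mp h with rfl | h
    · exact le_max_left _ _
    · exact (ih h).trans (le_max_right _ _)

lemma cutSize_le_cng {n : ℕ} (G : SimpleGraph (Fin n)) [DecidableRel G.Adj]
    {T t : BTree (Fin n)} (h : t ∈ T.subtrees) : cutSize G t.labels ≤ cng G T :=
  le_foldr_max_of_mem (List.mem_map_of_mem h)

end TreeAux
section SpecAux

open Finset

lemma sorted_second_le (m : Multiset ℝ) (x : ℝ)
    (h2 : 2 ≤ Multiset.card (m.filter (fun a => a ≤ x))) :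
    (m.sort (· ≤ ·)).getD 1 0 ≤ x := by
  by_contra hlt
  push_neg at hlt
  have hperm : ((m.sort (· ≤ ·) : List ℝ) : Multiset ℝ) = m := m.sort_eq _
  have hs : (m.sort (· ≤ ·)).Pairwise (· ≤ ·) := m.pairwise_sort _
  rw [← hperm] at h2
  set s := m.sort (· ≤ ·) with hsdef
  match s, hs, hlt, h2 with
  | [], _, hlt, h2 => simp at h2
  | [a], _, hlt, h2 =>
    have hc : (([a] : List ℝ) : Multiset ℝ) = {a} := rfl
    rw [hc] at h2
    have := Multiset.card_le_card (Multiset.filter_le (fun a => a ≤ x) ({a} : Multiset ℝ))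
    simp at this; omega
  | a :: b :: u, hs, hlt, h2 =>
    have hb : x < b := by simpa using hlt
    have hsu : ∀ c ∈ b :: u, x < c := by
      intro c hc
      rcases List.mem_cons.mp hc with rfl | hc
      · exact hb
      · exact hb.trans_le (List.rel_of_pairwise_cons hs.of_cons hc)
    have : Multiset.filter (fun a => a ≤ x) ((b : ℝ) ::ₘ (u : Multiset ℝ)) = 0 := by
      rw [Multiset.filter_eq_nil]
      intro c hc
      exact not_le.mpr (hsu c (by simpa using hc))
    have hcons : ((a :: b :: u : List ℝ) : Multiset ℝ) = a ::ₘ b ::ₘ (u : Multiset ℝ) := rfl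
    rw [hcons, Multiset.filter_cons, this] at h2
    by_cases hax : a ≤ x <;> simp [hax] at h2

lemma specM_eq {n : ℕ} (M : Matrix (Fin n) (Fin n) ℝ) (h : M.IsHermitian) :
    specM M = Finset.univ.val.map h.eigenvalues := by
  unfold specM
  rw [dif_pos h]

lemma length_sortedSpec {n : ℕ} (M : Matrix (Fin n) (Fin n) ℝ) (h : M.IsHermitian) :
    (sortedSpec M).length = n := by
  rw [sortedSpec, Multiset.length_sort, specM_eq M h, Multiset.card_map]
  simp

lemma second_le_of_two {n : ℕ} (M : Matrix (Fin n) (Fin n) ℝ) (h : M.IsHermitian)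
    (z : ℝ) (i j : Fin n) (hij : i ≠ j) (hi : h.eigenvalues i ≤ z) (hj : h.eigenvalues j ≤ z) :
    (sortedSpec M).getD 1 0 ≤ z := by
  apply sorted_second_le
  rw [specM_eq M h]
  classical
  have hsub : ({i, j} : Finset (Fin n)) ⊆ Finset.univ.filter (fun k => h.eigenvalues k ≤ z) := by
    intro k hk
    rcases Finset.mem_insert.mp hk with rfl | hk
    · simp [hi]
    · rw [Finset.mem_singleton] at hk; subst hk; simp [hj]
  have hcard : 2 ≤ (Finset.univ.filter (fun k => h.eigenvalues k ≤ z)).card := by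
    calc 2 = ({i, j} : Finset (Fin n)).card := (Finset.card_pair hij).symm
    _ ≤ _ := Finset.card_le_card hsub
  calc (2 : ℕ) ≤ (Finset.univ.filter (fun k => h.eigenvalues k ≤ z)).card := hcard
  _ = Multiset.card (Multiset.filter (fun k => h.eigenvalues k ≤ z) Finset.univ.val) := rfl
  _ = Multiset.card (Multiset.filter (fun a => a ≤ z) (Finset.univ.val.map h.eigenvalues)) := by
      rw [Multiset.filter_map]
      rw [Multiset.card_map]
      rfl

end SpecAux
section Rayleigh

open Finset

lemma rayleigh_second {n : ℕ} (hn : 2 ≤ n) (G : SimpleGraph (Fin n)) [DecidableRel G.Adj]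
    (x : Fin n → ℝ) (hx : x ⬝ᵥ (fun _ => (1 : ℝ)) = 0) :
    (sortedSpec (G.lapMatrix ℝ)).getD 1 0 * (x ⬝ᵥ x) ≤ x ⬝ᵥ (G.lapMatrix ℝ *ᵥ x) := by
  classical
  have hPSD := SimpleGraph.posSemidef_lapMatrix ℝ G
  have h : (G.lapMatrix ℝ).IsHermitian := hPSD.1
  set A := G.lapMatrix ℝ with hAdef
  set μ := (sortedSpec A).getD 1 0 with hμdef
  set U : Matrix (Fin n) (Fin n) ℝ := (h.eigenvectorUnitary : Matrix (Fin n) (Fin n) ℝ) with hUdef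
  set lam := h.eigenvalues with hlamdef
  have hU1 : star U * U = 1 := by
    rw [hUdef, ← Unitary.coe_star]; exact Unitary.coe_star_mul_self _
  have hU2 : U * star U = 1 := by
    rw [hUdef, ← Unitary.coe_star]; exact Unitary.coe_mul_star_self _
  have hDlam : (RCLike.ofReal ∘ lam : Fin n → ℝ) = lam := by
    funext i; simp
  have hA : A = U * Matrix.diagonal lam * star U := by
    conv_lhs => rw [h.spectral_theorem, Unitary.conjStarAlgAut_apply]
    rw [hDlam]
  -- vecMul/mulVec translation
  have hstarT : star U = Uᵀ := by
    rw [Matrix.star_eq_conjTranspose, Matrix.conjTranspose_eq_transpose_of_trivial]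
  have F1 : ∀ v w : Fin n → ℝ, (star U *ᵥ v) ⬝ᵥ w = v ⬝ᵥ (U *ᵥ w) := by
    intro v w
    rw [hstarT, Matrix.mulVec_transpose, Matrix.dotProduct_mulVec]
  have K0 : ∀ w : Fin n → ℝ, star U *ᵥ (U *ᵥ w) = w := by
    intro w; rw [Matrix.mulVec_mulVec, hU1, Matrix.one_mulVec]
  have K0' : ∀ w : Fin n → ℝ, U *ᵥ (star U *ᵥ w) = w := by
    intro w; rw [Matrix.mulVec_mulVec, hU2, Matrix.one_mulVec]
  set y := star U *ᵥ x with hydef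
  set ones : Fin n → ℝ := fun _ => 1 with honesdef
  set d := star U *ᵥ ones with hddef
  have hAmul : ∀ w : Fin n → ℝ, A *ᵥ w = U *ᵥ (Matrix.diagonal lam *ᵥ (star U *ᵥ w)) := by
    intro w
    rw [hA, ← Matrix.mulVec_mulVec, ← Matrix.mulVec_mulVec]
  have K2 : x ⬝ᵥ (A *ᵥ x) = ∑ i, lam i * y i ^ 2 := by
    rw [hAmul, ← F1]
    simp only [dotProduct, Matrix.mulVec_diagonal]
    congr 1; funext i; ring
  have K3 : x ⬝ᵥ x = y ⬝ᵥ y := by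
    rw [hydef, F1, K0']
  have K4 : A *ᵥ ones = 0 := G.lapMatrix_mulVec_const_eq_zero
  have K5 : ∀ i, lam i * d i = 0 := by
    have : Matrix.diagonal lam *ᵥ d = 0 := by
      have h1 : star U *ᵥ (A *ᵥ ones) = Matrix.diagonal lam *ᵥ d := by
        rw [hAmul, K0]
      rw [K4, Matrix.mulVec_zero] at h1
      exact h1.symm
    intro i
    have := congrFun this i
    rwa [Matrix.mulVec_diagonal] at this
  have K6 : d ⬝ᵥ d = (n : ℝ) := by
    rw [hddef, F1, K0']
    simp [honesdef, dotProduct]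
  have K7 : ∃ i₀ : Fin n, d i₀ ≠ 0 := by
    by_contra hc
    push_neg at hc
    have : d ⬝ᵥ d = 0 := by simp [dotProduct, hc]
    rw [K6] at this
    have : (0 : ℝ) < n := by positivity
    rw [‹(n:ℝ) = 0›] at this
    exact lt_irrefl _ this
  obtain ⟨i₀, hi₀⟩ := K7
  have hlam₀ : lam i₀ = 0 := by
    rcases mul_eq_zero.mp (K5 i₀) with h' | h'
    · exact h'
    · exact absurd h' hi₀
  have K8 : y ⬝ᵥ d = 0 := by
    rw [hddef, hydef, F1, K0']
    exact hx
  have hnn : ∀ i, 0 ≤ lam i := hPSD.eigenvalues_nonneg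
  have hyy : x ⬝ᵥ x = ∑ i, y i * y i := by rw [K3]; rfl
  rw [K2, hyy]
  by_cases hone : ∀ j, j ≠ i₀ → lam j ≠ 0
  · -- zero eigenvalue is simple
    have hd0 : ∀ j, j ≠ i₀ → d j = 0 := by
      intro j hj
      rcases mul_eq_zero.mp (K5 j) with h' | h'
      · exact absurd h' (hone j hj)
      · exact h'
    have hyd : y i₀ * d i₀ = 0 := by
      rw [← K8]
      have hdot : y ⬝ᵥ d = ∑ i, y i * d i := rfl
      rw [hdot]
      exact (Finset.sum_eq_single (f := fun i => y i * d i) i₀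
        (fun b _ hb => by show y b * d b = 0; rw [hd0 b hb, mul_zero])
        (fun hmem => absurd (Finset.mem_univ i₀) hmem)).symm
    have hyi₀ : y i₀ = 0 := by
      rcases mul_eq_zero.mp hyd with h' | h'
      · exact h'
      · exact absurd h' hi₀
    rw [Finset.mul_sum]
    apply Finset.sum_le_sum
    intro i _
    by_cases hii : i = i₀
    · subst hii; rw [hyi₀]; norm_num
    · have hμle : μ ≤ lam i := by
        apply second_le_of_two A h (lam i) i i₀ hii le_rfl
        show lam i₀ ≤ lam i
        rw [hlam₀]; exact hnn i
      have : μ * (y i * y i) ≤ lam i * (y i * y i) :=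
        mul_le_mul_of_nonneg_right hμle (mul_self_nonneg _)
      calc μ * (y i * y i) ≤ lam i * (y i * y i) := this
      _ = lam i * y i ^ 2 := by ring
  · -- zero eigenvalue has multiplicity ≥ 2
    push_neg at hone
    obtain ⟨j, hj, hlamj⟩ := hone
    have hμ0 : μ ≤ 0 := by
      apply second_le_of_two A h 0 j i₀ hj (le_of_eq hlamj) (le_of_eq hlam₀)
    calc μ * ∑ i, y i * y i ≤ 0 := by
          apply mul_nonpos_of_nonpos_of_nonneg hμ0
          exact Finset.sum_nonneg fun i _ => mul_self_nonneg _
    _ ≤ ∑ i, lam i * y i ^ 2 :=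
          Finset.sum_nonneg fun i _ => mul_nonneg (hnn i) (sq_nonneg _)

end Rayleigh
section TestVec

open Finset

variable {n : ℕ}

lemma sum_if_mem (S : Finset (Fin n)) (c1 c2 : ℝ) :
    ∑ v : Fin n, (if v ∈ S then c1 else c2) =
      (S.card : ℝ) * c1 + ((n : ℝ) - S.card) * c2 := by
  rw [Finset.sum_ite]
  have h1 : Finset.univ.filter (fun v : Fin n => v ∈ S) = S := by ext v; simp
  have h2 : Finset.univ.filter (fun v : Fin n => v ∉ S) = Sᶜ := by ext v; simp
  rw [h1, h2]
  have hcard : S.card ≤ n := by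
    simpa using Finset.card_le_card (Finset.subset_univ S)
  have h3 : (Sᶜ.card : ℝ) = (n : ℝ) - S.card := by
    rw [Finset.card_compl]
    simp only [Fintype.card_fin]
    rw [Nat.cast_sub hcard]
  simp [Finset.sum_const, nsmul_eq_mul, h3]

lemma double_sum_ite_card (P : Fin n → Fin n → Prop) [∀ i j, Decidable (P i j)] (c : ℝ) :
    ∑ i : Fin n, ∑ j : Fin n, (if P i j then c else 0) =
      ((Finset.univ.filter (fun e : Fin n × Fin n => P e.1 e.2)).card : ℝ) * c := by
  rw [← Finset.sum_product']
  rw [← Finset.sum_filter]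
  rw [Finset.sum_const, nsmul_eq_mul]
  congr 2

lemma card_swap_cut (G : SimpleGraph (Fin n)) [DecidableRel G.Adj] (S : Finset (Fin n)) :
    (Finset.univ.filter fun e : Fin n × Fin n =>
      G.Adj e.1 e.2 ∧ e.2 ∈ S ∧ e.1 ∉ S).card = cutSize G S := by
  rw [cutSize]
  apply Finset.card_bij' (fun e _ => Prod.swap e) (fun e _ => Prod.swap e)
  · intro e he
    simp only [Finset.mem_filter, Finset.mem_univ, true_and] at he ⊢
    exact ⟨he.1.symm, he.2⟩
  · intro e he
    simp only [Finset.mem_filter, Finset.mem_univ, true_and] at he ⊢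
    exact ⟨he.1.symm, he.2⟩
  · intro e _; simp
  · intro e _; simp

lemma quad_form_val (G : SimpleGraph (Fin n)) [DecidableRel G.Adj] (S : Finset (Fin n)) :
    (fun v => if v ∈ S then ((n : ℝ) - S.card) else -(S.card : ℝ)) ⬝ᵥ
      (G.lapMatrix ℝ *ᵥ (fun v => if v ∈ S then ((n : ℝ) - S.card) else -(S.card : ℝ)))
      = (cutSize G S : ℝ) * (n : ℝ) ^ 2 := by
  set x : Fin n → ℝ := fun v => if v ∈ S then ((n : ℝ) - S.card) else -(S.card : ℝ) with hxdef
  rw [← Matrix.toLinearMap₂'_apply', SimpleGraph.lapMatrix_toLinearMap₂']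
  have hsplit : ∀ i j : Fin n, (if G.Adj i j then (x i - x j) ^ 2 else 0) =
      (if G.Adj i j ∧ i ∈ S ∧ j ∉ S then ((n : ℝ)) ^ 2 else 0) +
      (if G.Adj i j ∧ j ∈ S ∧ i ∉ S then ((n : ℝ)) ^ 2 else 0) := by
    intro i j
    by_cases hadj : G.Adj i j
    · by_cases hi : i ∈ S <;> by_cases hj : j ∈ S <;>
        simp [hxdef, hadj, hi, hj] <;> ring
    · simp [hadj]
  simp only [hsplit]
  simp only [Finset.sum_add_distrib]
  rw [double_sum_ite_card (fun i j => G.Adj i j ∧ i ∈ S ∧ j ∉ S) ((n : ℝ) ^ 2),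
    double_sum_ite_card (fun i j => G.Adj i j ∧ j ∈ S ∧ i ∉ S) ((n : ℝ) ^ 2)]
  rw [card_swap_cut]
  have hc : (Finset.univ.filter fun e : Fin n × Fin n =>
      G.Adj e.1 e.2 ∧ e.1 ∈ S ∧ e.2 ∉ S).card = cutSize G S := rfl
  rw [hc]
  ring

end TestVec

/-- Congestion lower bound: for any embedding of `V(G)` into the leaves of a
rooted binary tree (encoded by a binary tree `T` whose leaf labels are distinct
and exhaust `V(G)`), the congestion is at least `(2/9)·λ₂(G)·n`. -/
theorem congestion_lower_bound {n : ℕ} (G : SimpleGraph (Fin n)) [DecidableRel G.Adj]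
    (T : BTree (Fin n)) (hnodup : T.leaves.Nodup) (hlabels : T.labels = Finset.univ) :
    2 / 9 * (sortedSpec (G.lapMatrix ℝ)).getD 1 0 * n ≤ (cng G T : ℝ) := by
  have hcng0 : (0 : ℝ) ≤ (cng G T : ℝ) := Nat.cast_nonneg _
  rcases Nat.lt_or_ge n 2 with hn | hn
  · have hμ : (sortedSpec (G.lapMatrix ℝ)).getD 1 0 = 0 := by
      apply List.getD_eq_default
      rw [length_sortedSpec _ (SimpleGraph.posSemidef_lapMatrix ℝ G).1]
      omega
    calc 2 / 9 * (sortedSpec (G.lapMatrix ℝ)).getD 1 0 * n = 0 := by rw [hμ]; ring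
    _ ≤ (cng G T : ℝ) := hcng0
  · have hroot1 : T.labels.card = n := by rw [hlabels]; simp
    obtain ⟨t, hmem, hS1, hS2⟩ := exists_balanced hn T hnodup (by omega) (by omega)
    set S := t.labels with hSdef
    set x : Fin n → ℝ := fun v => if v ∈ S then ((n : ℝ) - S.card) else -(S.card : ℝ)
      with hxdef
    have hones : x ⬝ᵥ (fun _ => (1 : ℝ)) = 0 := by
      have h1 : x ⬝ᵥ (fun _ => (1 : ℝ)) = ∑ v, x v * 1 := rfl
      rw [h1]
      simp only [mul_one]
      rw [hxdef]
      rw [sum_if_mem]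
      ring
    have hxx : x ⬝ᵥ x =
        (S.card : ℝ) * ((n : ℝ) - S.card) ^ 2 + ((n : ℝ) - S.card) * (S.card : ℝ) ^ 2 := by
      have h1 : x ⬝ᵥ x = ∑ v, x v * x v := rfl
      have h2 : ∀ v, x v * x v =
          if v ∈ S then ((n : ℝ) - S.card) ^ 2 else (S.card : ℝ) ^ 2 := by
        intro v
        rw [hxdef]
        by_cases hv : v ∈ S <;> simp [hv] <;> ring
      rw [h1]
      simp only [h2]
      rw [sum_if_mem]
    have hquad := quad_form_val G S
    rw [← hxdef] at hquad
    have hray := rayleigh_second hn G x hones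
    rw [hxx, hquad] at hray
    have hcle : (cutSize G S : ℝ) ≤ (cng G T : ℝ) :=
      Nat.cast_le.mpr (cutSize_le_cng G hmem)
    set μ := (sortedSpec (G.lapMatrix ℝ)).getD 1 0 with hμdef
    have hs1 : (n : ℝ) ≤ 3 * (S.card : ℝ) := by exact_mod_cast hS1
    have hs2 : 3 * (S.card : ℝ) ≤ 2 * (n : ℝ) := by exact_mod_cast hS2
    have hn2 : (2 : ℝ) ≤ (n : ℝ) := by exact_mod_cast hn
    rcases le_or_gt μ 0 with hμ | hμ
    · calc 2 / 9 * μ * n ≤ 0 := by nlinarith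
      _ ≤ (cng G T : ℝ) := hcng0
    · have hNN : (0 : ℝ) < (n : ℝ) ^ 2 := by positivity
      have h4 : 0 ≤ μ * (n : ℝ) * ((3 * (S.card : ℝ) - n) * (2 * (n : ℝ) - 3 * S.card)) := by
        apply mul_nonneg (mul_nonneg hμ.le (by linarith))
        apply mul_nonneg <;> linarith
      have key : 2 / 9 * μ * n ≤ (cutSize G S : ℝ) := by nlinarith [hray, h4, hNN]
      exact key.trans hcle
end

section
/- For any graph G with maximum degree Δ(G), the treewidth satisfies Δ(G)·(tw(G)+1) ≥ tw(L(G)) + 1 ≥ tw(G), where L(G) is the line graph of G. -/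
open SimpleGraph

/-- A tree decomposition of a graph `G`: a tree `T` with bags of vertices
attached to its nodes, covering all vertices and edges, such that for each
vertex the set of bags containing it is connected in the tree (every node on a
path between two bags containing `v` also contains `v`). -/
structure TreeDecomp {V : Type} [DecidableEq V] (G : SimpleGraph V) where
  ι : Type
  T : SimpleGraph ι
  isTree : T.IsTree
  bag : ι → Finset V
  mem_vert : ∀ v : V, ∃ i, v ∈ bag i
  mem_edge : ∀ ⦃u v : V⦄, G.Adj u v → ∃ i, u ∈ bag i ∧ v ∈ bag i
  coherent : ∀ (v : V) (i j : ι) (p : T.Walk i j), p.IsPath →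
    v ∈ bag i → v ∈ bag j → ∀ k ∈ p.support, v ∈ bag k

/-- The treewidth of a finite graph: the least `w` such that `G` admits a tree
decomposition with all bags of size at most `w + 1`. -/
noncomputable def treewidth {V : Type} [Fintype V] [DecidableEq V] (G : SimpleGraph V) : ℕ :=
  sInf {w : ℕ | ∃ D : TreeDecomp G, ∀ i, (D.bag i).card ≤ w + 1}

section Triv
variable {V : Type} [Fintype V] [DecidableEq V]

def trivDecomp (G : SimpleGraph V) : TreeDecomp G where
  ι := Unit
  T := ⊥
  isTree := by
    constructor
    · haveI : Nonempty Unit := ⟨()⟩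
      refine ⟨fun a b => ?_⟩
      cases a; cases b; exact Reachable.refl _
    · intro v c hc
      exact hc.ne_bot rfl
  bag := fun _ => Finset.univ
  mem_vert := fun v => ⟨(), Finset.mem_univ v⟩
  mem_edge := fun u v _ => ⟨(), Finset.mem_univ u, Finset.mem_univ v⟩
  coherent := fun v _ _ _ _ _ _ k _ => Finset.mem_univ v

lemma tw_set_nonempty (G : SimpleGraph V) :
    {w : ℕ | ∃ D : TreeDecomp G, ∀ i, (D.bag i).card ≤ w + 1}.Nonempty :=
  ⟨Fintype.card V, trivDecomp G, fun _ => by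
    simpa using Nat.le_succ_of_le (Finset.card_le_univ _)⟩

end Triv

section TreeLemmas
variable {ι : Type} {T : SimpleGraph ι}

noncomputable def tpath (hT : T.IsTree) (i j : ι) : T.Walk i j :=
  (hT.existsUnique_path i j).choose

lemma tpath_isPath (hT : T.IsTree) (i j : ι) : (tpath hT i j).IsPath :=
  (hT.existsUnique_path i j).choose_spec.1

lemma eq_tpath (hT : T.IsTree) {i j : ι} (w : T.Walk i j) (hw : w.IsPath) :
    w = tpath hT i j :=
  (hT.existsUnique_path i j).choose_spec.2 w hw

lemma tpath_support_subset (hT : T.IsTree) {i j : ι} (w : T.Walk i j) :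
    (tpath hT i j).support ⊆ w.support := by
  classical
  have h : w.bypass = tpath hT i j := eq_tpath hT _ w.bypass_isPath
  rw [← h]; exact w.support_bypass_subset

lemma tpath_support_union (hT : T.IsTree) (i j m : ι) {k : ι}
    (hk : k ∈ (tpath hT i j).support) :
    k ∈ (tpath hT i m).support ∨ k ∈ (tpath hT m j).support := by
  have := tpath_support_subset hT ((tpath hT i m).append (tpath hT m j)) hk
  rwa [Walk.mem_support_append_iff] at this

/-- path-closed subsets of a tree -/
def PC (hT : T.IsTree) (S : Set ι) : Prop :=
  ∀ ⦃i⦄, i ∈ S → ∀ ⦃j⦄, j ∈ S → ∀ ⦃k⦄, k ∈ (tpath hT i j).support → k ∈ S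

lemma PC.inter {hT : T.IsTree} {A B : Set ι} (hA : PC hT A) (hB : PC hT B) :
    PC hT (A ∩ B) := fun _ hi _ hj _ hk =>
  ⟨hA hi.1 hj.1 hk, hB hi.2 hj.2 hk⟩

lemma isPath_append {u v w : ι} {p : T.Walk u v} {q : T.Walk v w}
    (hp : p.IsPath) (hq : q.IsPath)
    (h : ∀ z, z ∈ p.support → z ∈ q.support → z = v) : (p.append q).IsPath := by
  rw [Walk.isPath_def, Walk.support_append]
  apply List.Nodup.append hp.support_nodup (hq.support_nodup.tail)
  intro z hzp hzq
  have hz : z = v := h z hzp (List.mem_of_mem_tail hzq)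
  subst hz
  have := hq.support_nodup
  rw [q.support_eq_cons] at this
  exact (List.nodup_cons.mp this).1 hzq

lemma exists_first_mem {x y : ι} (w : T.Walk x y) (S : Set ι) (hy : y ∈ S) :
    ∃ (m : ι) (w1 : T.Walk x m) (w2 : T.Walk m y),
      w1.append w2 = w ∧ m ∈ S ∧ ∀ z ∈ w1.support, z ∈ S → z = m := by
  induction w with
  | nil => exact ⟨_, Walk.nil, Walk.nil, rfl, hy, by simp⟩
  | @cons a b c hadj w ih =>
    by_cases ha : a ∈ S
    · exact ⟨a, Walk.nil, Walk.cons hadj w, rfl, ha, by simp⟩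
    · obtain ⟨m, w1, w2, heq, hm, hmin⟩ := ih hy
      refine ⟨m, Walk.cons hadj w1, w2, by simp [heq], hm, ?_⟩
      intro z hz hzS
      rcases List.mem_cons.mp (by simpa using hz) with rfl | hz'
      · exact absurd hzS ha
      · exact hmin z hz' hzS

lemma median (hT : T.IsTree) (a b c : ι) :
    ∃ m, m ∈ (tpath hT a b).support ∧ m ∈ (tpath hT a c).support ∧
      m ∈ (tpath hT b c).support := by
  classical
  obtain ⟨m, w1, w2, heq, hmS, hmin⟩ :=
    exists_first_mem ((tpath hT a b).reverse) {z | z ∈ (tpath hT a c).support}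
      (by simp)
  have hw1path : w1.IsPath := by
    have : (w1.append w2).IsPath := by rw [heq]; exact (tpath_isPath hT a b).reverse
    exact this.of_append_left
  have hsub : (tpath hT m c).support ⊆ (tpath hT a c).support := by
    have h1 : ((tpath hT a c).dropUntil m hmS).IsPath :=
      (tpath_isPath hT a c).dropUntil hmS
    have h2 := eq_tpath hT _ h1
    rw [← h2]; exact Walk.support_dropUntil_subset _ hmS
  have hwpath : (w1.append (tpath hT m c)).IsPath := by
    apply isPath_append hw1path (tpath_isPath hT m c)
    intro z hz1 hz2
    exact hmin z hz1 (hsub hz2)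
  have hbc : w1.append (tpath hT m c) = tpath hT b c := eq_tpath hT _ hwpath
  have hm1 : m ∈ w1.support := w1.end_mem_support
  refine ⟨m, ?_, hmS, ?_⟩
  · have : m ∈ (w1.append w2).support := Walk.subset_support_append_left _ _ hm1
    rw [heq, Walk.support_reverse] at this
    exact List.mem_reverse.mp this
  · rw [← hbc, Walk.mem_support_append_iff]; exact Or.inl hm1

lemma helly3 (hT : T.IsTree) {A B C : Set ι} (hA : PC hT A) (hB : PC hT B)
    (hC : PC hT C) (hAB : (A ∩ B).Nonempty) (hAC : (A ∩ C).Nonempty)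
    (hBC : (B ∩ C).Nonempty) : (A ∩ B ∩ C).Nonempty := by
  obtain ⟨c, hcA, hcB⟩ := hAB
  obtain ⟨b, hbA, hbC⟩ := hAC
  obtain ⟨a, haB, haC⟩ := hBC
  obtain ⟨m, hab, hac, hbc⟩ := median hT a b c
  exact ⟨m, ⟨hA hbA hcA hbc, hB haB hcB hac⟩, hC haC hbC hab⟩

lemma helly_aux (hT : T.IsTree) :
    ∀ (n : ℕ) (L : List (Set ι)), L.length = n → L ≠ [] →
      (∀ S ∈ L, PC hT S) → (∀ S1 ∈ L, ∀ S2 ∈ L, (S1 ∩ S2).Nonempty) →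
      ∃ m, ∀ S ∈ L, m ∈ S := by
  intro n
  induction n with
  | zero => intro L hL hne _ _; cases L with
    | nil => exact absurd rfl hne
    | cons => simp at hL
  | succ n ih =>
    intro L hL hne hPC hpair
    match L with
    | [A] =>
      obtain ⟨m, hm, _⟩ := hpair A (by simp) A (by simp)
      exact ⟨m, by simpa using hm⟩
    | A :: B :: rest =>
      have hlen : ((A ∩ B) :: rest).length = n := by simpa using hL
      obtain ⟨m, hm⟩ := ih ((A ∩ B) :: rest) hlen (by simp)
        (by
          intro S hS
          rcases List.mem_cons.mp hS with rfl | hS'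
          · exact (hPC A (by simp)).inter (hPC B (by simp))
          · exact hPC S (by simp [hS']))
        (by
          intro S1 hS1 S2 hS2
          rcases List.mem_cons.mp hS1 with rfl | hS1' <;>
            rcases List.mem_cons.mp hS2 with h2 | hS2'
          · rw [h2] at *
            obtain ⟨m, hm⟩ := hpair A (by simp) B (by simp)
            exact ⟨m, hm, hm⟩
          · have := helly3 hT (hPC A (by simp)) (hPC B (by simp))
              (hPC S2 (by simp [hS2']))
              (hpair A (by simp) B (by simp))
              (hpair A (by simp) S2 (by simp [hS2']))
              (hpair B (by simp) S2 (by simp [hS2']))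
            exact this
          · rw [h2] at *
            have := helly3 hT (hPC A (by simp)) (hPC B (by simp))
              (hPC S1 (by simp [hS1']))
              (hpair A (by simp) B (by simp))
              (hpair A (by simp) S1 (by simp [hS1']))
              (hpair B (by simp) S1 (by simp [hS1']))
            obtain ⟨m, ⟨h1, h2⟩, h3⟩ := this
            exact ⟨m, h3, h1, h2⟩
          · exact hpair S1 (by simp [hS1']) S2 (by simp [hS2']))
      refine ⟨m, ?_⟩
      intro S hS
      have h1 := hm (A ∩ B) (by simp)
      rcases List.mem_cons.mp hS with rfl | hS'
      · exact h1.1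
      · rcases List.mem_cons.mp hS' with rfl | hS''
        · exact h1.2
        · exact hm S (by simp [hS''])

lemma helly (hT : T.IsTree) (L : List (Set ι)) (hne : L ≠ [])
    (hPC : ∀ S ∈ L, PC hT S) (hpair : ∀ S1 ∈ L, ∀ S2 ∈ L, (S1 ∩ S2).Nonempty) :
    ∃ m, ∀ S ∈ L, m ∈ S :=
  helly_aux hT L.length L rfl hne hPC hpair

end TreeLemmas

section Dir2
variable {V : Type} [Fintype V] [DecidableEq V] (G : SimpleGraph V) [DecidableRel G.Adj]

lemma dir2 (D : TreeDecomp G) (w : ℕ) (hw : ∀ i, (D.bag i).card ≤ w + 1) :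
    ∃ D2 : TreeDecomp G.lineGraph, ∀ i, (D2.bag i).card ≤ G.maxDegree * (w + 1) := by
  classical
  set bag2 : D.ι → Finset G.edgeSet :=
    fun i => Finset.univ.filter (fun e => ∃ v ∈ D.bag i, v ∈ (e : Sym2 V)) with hbag2
  have mem_bag2 : ∀ (i : D.ι) (e : G.edgeSet),
      e ∈ bag2 i ↔ ∃ v ∈ D.bag i, v ∈ (e : Sym2 V) := by
    intro i e; simp [hbag2]
  refine ⟨⟨D.ι, D.T, D.isTree, bag2, ?_, ?_, ?_⟩, ?_⟩
  · -- mem_vert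
    rintro ⟨e, heE⟩
    induction e with
    | _ u v =>
      obtain ⟨i, hu, _⟩ := D.mem_edge (G.mem_edgeSet.mp heE)
      exact ⟨i, (mem_bag2 i _).mpr ⟨u, hu, by simp⟩⟩
  · -- mem_edge
    intro e1 e2 hadj
    obtain ⟨-, v, h1, h2⟩ := lineGraph_adj_iff_exists.mp hadj
    obtain ⟨i, hv⟩ := D.mem_vert v
    exact ⟨i, (mem_bag2 i _).mpr ⟨v, hv, h1⟩, (mem_bag2 i _).mpr ⟨v, hv, h2⟩⟩
  · -- coherent
    intro e i j p hp h1 h2 k hk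
    obtain ⟨a, ha, hae⟩ := (mem_bag2 i e).mp h1
    obtain ⟨b, hb, hbe⟩ := (mem_bag2 j e).mp h2
    by_cases hab : a = b
    · subst hab
      exact (mem_bag2 k e).mpr ⟨a, D.coherent a i j p hp ha hb k hk, hae⟩
    · have heq : (e : Sym2 V) = s(a, b) := (Sym2.mem_and_mem_iff hab).mp ⟨hae, hbe⟩
      have hGab : G.Adj a b := G.mem_edgeSet.mp (heq ▸ e.2)
      obtain ⟨m, ham, hbm⟩ := D.mem_edge hGab
      have hpt : p = tpath D.isTree i j := eq_tpath D.isTree p hp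
      have hk' : k ∈ (tpath D.isTree i j).support := hpt ▸ hk
      rcases tpath_support_union D.isTree i j m hk' with hkl | hkr
      · exact (mem_bag2 k e).mpr
          ⟨a, D.coherent a i m _ (tpath_isPath _ _ _) ha ham k hkl, hae⟩
      · exact (mem_bag2 k e).mpr
          ⟨b, D.coherent b m j _ (tpath_isPath _ _ _) hbm hb k hkr, hbe⟩
  · -- size
    intro i
    have h1 : (bag2 i).card = ((bag2 i).image Subtype.val).card :=
      (Finset.card_image_of_injective _ Subtype.val_injective).symm
    have h2 : (bag2 i).image Subtype.val ⊆ (D.bag i).biUnion (fun v => G.incidenceFinset v) := by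
      intro e' he'
      obtain ⟨e, he, rfl⟩ := Finset.mem_image.mp he'
      obtain ⟨v, hv, hve⟩ := (mem_bag2 i e).mp he
      exact Finset.mem_biUnion.mpr ⟨v, hv, (G.mem_incidenceFinset (v := v) _).mpr ⟨e.2, hve⟩⟩
    calc (bag2 i).card ≤ ((D.bag i).biUnion (fun v => G.incidenceFinset v)).card := by
          rw [h1]; exact Finset.card_le_card h2
      _ ≤ ∑ v ∈ D.bag i, (G.incidenceFinset v).card := Finset.card_biUnion_le
      _ ≤ ∑ _v ∈ D.bag i, G.maxDegree := by
          apply Finset.sum_le_sum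
          intro v _
          rw [G.card_incidenceFinset_eq_degree]
          exact G.degree_le_maxDegree v
      _ = (D.bag i).card * G.maxDegree := by rw [Finset.sum_const, smul_eq_mul]
      _ ≤ (w + 1) * G.maxDegree := Nat.mul_le_mul_right _ (hw i)
      _ = G.maxDegree * (w + 1) := Nat.mul_comm _ _

end Dir2

section MoreTree
variable {ι : Type} {T : SimpleGraph ι}

lemma tpath_symm_support (hT : T.IsTree) {x y k : ι}
    (h : k ∈ (tpath hT x y).support) : k ∈ (tpath hT y x).support := by
  have hrev : (tpath hT x y).reverse = tpath hT y x :=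
    eq_tpath hT _ (tpath_isPath hT x y).reverse
  rw [← hrev, Walk.support_reverse, List.mem_reverse]
  exact h

lemma tpath_self_support (hT : T.IsTree) (x : ι) :
    (tpath hT x x).support = [x] := by
  have : (Walk.nil : T.Walk x x) = tpath hT x x := eq_tpath hT _ (Walk.IsPath.nil)
  rw [← this]; rfl

lemma tpath_adj_support (hT : T.IsTree) {x y : ι} (h : T.Adj x y) :
    (tpath hT x y).support = [x, y] := by
  have hpath : (Walk.cons h Walk.nil).IsPath := by
    simp [Walk.isPath_def, h.ne]
  have : Walk.cons h Walk.nil = tpath hT x y := eq_tpath hT _ hpath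
  rw [← this]; rfl

end MoreTree

section Pendant
variable {ι : Type} {V : Type} (T : SimpleGraph ι) (s : V → ι)

def pendantGraph : SimpleGraph (ι ⊕ V) where
  Adj x y := match x, y with
    | .inl i, .inl j => T.Adj i j
    | .inl i, .inr v => s v = i
    | .inr v, .inl i => s v = i
    | .inr _, .inr _ => False
  symm := by
    constructor
    rintro (i|v) (j|u) h
    · exact T.adj_symm h
    · exact h
    · exact h
    · exact h.elim
  loopless := by
    constructor
    rintro (i|v) h
    · exact T.loopless.irrefl i h
    · exact h.elim

def pinl : T →g pendantGraph T s := ⟨Sum.inl, fun h => h⟩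

lemma pendant_adj_leaf (v : V) : (pendantGraph T s).Adj (Sum.inr v) (Sum.inl (s v)) := rfl

lemma pendant_no_cycle_at_leaf (v : V) (c : (pendantGraph T s).Walk (Sum.inr v) (Sum.inr v)) :
    ¬ c.IsCycle := by
  intro hc
  cases c with
  | nil => exact hc.ne_nil rfl
  | @cons _ y _ h q =>
    rcases y with i | u
    · have hi : s v = i := h
      subst hi
      -- find the same edge in q
      have hq : s(Sum.inr v, (Sum.inl (s v) : ι ⊕ V)) ∈ q.edges := by
        cases hq : q.reverse with
        | @cons _ z _ h2 q2 =>
          rcases z with i2 | u2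
          · have hi2 : s v = i2 := h2
            subst hi2
            have hmem : s(Sum.inr v, (Sum.inl (s v) : ι ⊕ V)) ∈ q.reverse.edges := by
              rw [hq]; simp
            rwa [Walk.edges_reverse, List.mem_reverse] at hmem
          · exact h2.elim
      have hnodup := hc.edges_nodup
      rw [Walk.edges_cons] at hnodup
      exact (List.nodup_cons.mp hnodup).1 hq
    · exact h.elim

lemma pendant_lift {x y : ι ⊕ V} (w : (pendantGraph T s).Walk x y)
    (hw : ∀ z ∈ w.support, ∀ v : V, z ≠ Sum.inr v) :
    ∀ (i j : ι) (hx : x = Sum.inl i) (hy : y = Sum.inl j),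
      ∃ w' : T.Walk i j, w'.map (pinl T s) = w.copy hx hy := by
  induction w with
  | nil =>
    intro i j hx hy
    subst hx
    obtain rfl : i = j := Sum.inl_injective hy
    exact ⟨Walk.nil, by simp; rfl⟩
  | @cons a b c h q ih =>
    intro i j hx hy
    subst hx; subst hy
    rcases b with i2 | u
    · have h' : T.Adj i i2 := h
      obtain ⟨w', hw'⟩ := ih (fun z hz v => hw z (by simp [hz]) v) i2 j rfl rfl
      refine ⟨Walk.cons h' w', ?_⟩
      simp only [Walk.copy_rfl_rfl] at hw' ⊢
      rw [Walk.map_cons, hw']; rfl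
    · exact absurd rfl (hw (Sum.inr u) (by simp) u)

lemma pendant_isTree (hT : T.IsTree) : (pendantGraph T s).IsTree := by
  constructor
  · -- connected
    have hproj : ∀ x : ι ⊕ V, (pendantGraph T s).Reachable x
        (Sum.inl (Sum.elim id s x)) := by
      rintro (i | v)
      · exact Reachable.refl _
      · exact (pendant_adj_leaf T s v).reachable
    haveI : Nonempty (ι ⊕ V) := ⟨Sum.inl hT.isConnected.nonempty.some⟩
    refine ⟨fun x y => ?_⟩
    refine (hproj x).trans (Reachable.trans ?_ (hproj y).symm)
    exact Reachable.map (pinl T s) (hT.isConnected.preconnected _ _)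
  · -- acyclic
    intro x c hc
    classical
    rcases Classical.em (∃ v : V, Sum.inr v ∈ c.support) with hinr | hinr
    · obtain ⟨v, hv⟩ := hinr
      exact pendant_no_cycle_at_leaf T s v (c.rotate _ hv) (hc.rotate hv)
    · push_neg at hinr
      have hx : ∀ z ∈ c.support, ∀ v : V, z ≠ Sum.inr v := by
        intro z hz v hzv
        exact hinr v (hzv ▸ hz)
      rcases x with i | v
      · obtain ⟨c', hc'⟩ := pendant_lift T s c hx i i rfl rfl
        rw [Walk.copy_rfl_rfl] at hc'
        rw [← hc'] at hc
        exact hT.IsAcyclic c'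
          ((Walk.map_isCycle_iff_of_injective Sum.inl_injective).mp hc)
      · exact absurd c.start_mem_support (hinr v)

end Pendant

section Dir1
variable {V : Type} [Fintype V] [DecidableEq V] (G : SimpleGraph V) [DecidableRel G.Adj]

lemma exists_hub (D : TreeDecomp G.lineGraph) (he : ∃ u v, G.Adj u v) :
    ∃ s : V → D.ι, ∀ (v : V) (e : G.edgeSet), v ∈ (e : Sym2 V) → e ∈ D.bag (s v) := by
  classical
  obtain ⟨u0, v0, h0⟩ := he
  obtain ⟨i0, -⟩ := D.mem_vert ⟨s(u0, v0), G.mem_edgeSet.mpr h0⟩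
  have key : ∀ v : V, ∃ i : D.ι, ∀ e : G.edgeSet, v ∈ (e : Sym2 V) → e ∈ D.bag i := by
    intro v
    set Es : Finset G.edgeSet := Finset.univ.filter (fun e => v ∈ (e : Sym2 V)) with hEs
    rcases eq_or_ne Es ∅ with hemp | hne
    · refine ⟨i0, fun e hev => ?_⟩
      have : e ∈ Es := by simp [hEs, hev]
      rw [hemp] at this
      simp at this
    · set L : List (Set D.ι) := Es.toList.map (fun e => {i | e ∈ D.bag i}) with hL
      have hLne : L ≠ [] := by
        simp [hL, hne]
      have hLpc : ∀ S ∈ L, PC D.isTree S := by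
        intro S hS
        obtain ⟨e, -, rfl⟩ := List.mem_map.mp hS
        intro i hi j hj k hk
        exact D.coherent e i j _ (tpath_isPath _ _ _) hi hj k hk
      have hLpair : ∀ S1 ∈ L, ∀ S2 ∈ L, (S1 ∩ S2).Nonempty := by
        intro S1 hS1 S2 hS2
        obtain ⟨e1, he1, rfl⟩ := List.mem_map.mp hS1
        obtain ⟨e2, he2, rfl⟩ := List.mem_map.mp hS2
        have hv1 : v ∈ (e1 : Sym2 V) := by
          have := Finset.mem_toList.mp he1; simp [hEs] at this; exact this
        have hv2 : v ∈ (e2 : Sym2 V) := by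
          have := Finset.mem_toList.mp he2; simp [hEs] at this; exact this
        rcases eq_or_ne e1 e2 with rfl | hne12
        · obtain ⟨i, hi⟩ := D.mem_vert e1
          exact ⟨i, hi, hi⟩
        · have hadj : (G.lineGraph).Adj e1 e2 :=
            lineGraph_adj_iff_exists.mpr ⟨hne12, v, hv1, hv2⟩
          obtain ⟨i, h1, h2⟩ := D.mem_edge hadj
          exact ⟨i, h1, h2⟩
      obtain ⟨m, hm⟩ := helly D.isTree L hLne hLpc hLpair
      refine ⟨m, fun e hev => ?_⟩
      exact hm {i | e ∈ D.bag i}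
        (List.mem_map.mpr ⟨e, Finset.mem_toList.mpr (by simp [hEs, hev]), rfl⟩)
  exact ⟨fun v => (key v).choose, fun v => (key v).choose_spec⟩

lemma dir1 (D : TreeDecomp G.lineGraph) (he : ∃ u v, G.Adj u v) (w : ℕ)
    (hw : ∀ i, (D.bag i).card ≤ w + 1) :
    ∃ D1 : TreeDecomp G, ∀ i, (D1.bag i).card ≤ w + 2 := by
  classical
  obtain ⟨s, hs⟩ := exists_hub G D he
  set f : G.edgeSet → V := fun e => (e : Sym2 V).out.1 with hf
  have hfmem : ∀ e : G.edgeSet, f e ∈ (e : Sym2 V) := fun e => Sym2.out_fst_mem _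
  have hT1 : (pendantGraph D.T s).IsTree := pendant_isTree D.T s D.isTree
  set T1 := pendantGraph D.T s with hT1def
  set bag1 : D.ι ⊕ V → Finset V :=
    Sum.elim (fun i => (D.bag i).image f) (fun v => insert v ((D.bag (s v)).image f))
    with hbag1
  set W : V → Set D.ι := fun v => {i | ∃ e ∈ D.bag i, f e = v} with hW
  have hWinl : ∀ (v : V) (i : D.ι), v ∈ bag1 (Sum.inl i) ↔ i ∈ W v := by
    intro v i
    simp [hbag1, hW, Finset.mem_image]
  have hWinr : ∀ (v u : V), v ∈ bag1 (Sum.inr u) ↔ v = u ∨ s u ∈ W v := by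
    intro v u
    simp [hbag1, hW, Finset.mem_image]
  have hWpc : ∀ v : V, PC D.isTree (W v) := by
    intro v i hi j hj k hk
    obtain ⟨e1, he1, hf1⟩ := hi
    obtain ⟨e2, he2, hf2⟩ := hj
    rcases eq_or_ne e1 e2 with rfl | hne
    · exact ⟨e1, D.coherent e1 i j _ (tpath_isPath _ _ _) he1 he2 k hk, hf1⟩
    · have hv1 : v ∈ (e1 : Sym2 V) := hf1 ▸ hfmem e1
      have hv2 : v ∈ (e2 : Sym2 V) := hf2 ▸ hfmem e2
      have hadj : (G.lineGraph).Adj e1 e2 := lineGraph_adj_iff_exists.mpr ⟨hne, v, hv1, hv2⟩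
      obtain ⟨m, hm1, hm2⟩ := D.mem_edge hadj
      rcases tpath_support_union D.isTree i j m hk with hkl | hkr
      · exact ⟨e1, D.coherent e1 i m _ (tpath_isPath _ _ _) he1 hm1 k hkl, hf1⟩
      · exact ⟨e2, D.coherent e2 m j _ (tpath_isPath _ _ _) hm2 he2 k hkr, hf2⟩
  have hWhub : ∀ (v : V) (i : D.ι), i ∈ W v → s v ∈ W v := by
    rintro v i ⟨e, hei, hfe⟩
    exact ⟨e, hs v e (hfe ▸ hfmem e), hfe⟩
  have seg_inl : ∀ (v : V) {i j : D.ι}, i ∈ W v → j ∈ W v →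
      ∀ k ∈ (tpath hT1 (Sum.inl i) (Sum.inl j)).support, v ∈ bag1 k := by
    intro v i j hi hj k hk
    have hmap : (tpath D.isTree i j).map (pinl D.T s) =
        tpath hT1 (Sum.inl i) (Sum.inl j) :=
      eq_tpath hT1 _ (Walk.map_isPath_of_injective Sum.inl_injective (tpath_isPath _ _ _))
    rw [← hmap] at hk
    erw [Walk.support_map] at hk
    obtain ⟨k', hk', rfl⟩ := List.mem_map.mp hk
    exact (hWinl v k').mpr (hWpc v hi hj hk')
  have seg_adj : ∀ (v : V) {x y : D.ι ⊕ V}, T1.Adj x y → v ∈ bag1 x → v ∈ bag1 y →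
      ∀ k ∈ (tpath hT1 x y).support, v ∈ bag1 k := by
    intro v x y hadj hx hy k hk
    rw [tpath_adj_support hT1 hadj] at hk
    simp only [List.mem_cons, List.mem_singleton, List.not_mem_nil, or_false] at hk
    rcases hk with rfl | rfl <;> assumption
  have hleafadj : ∀ u : V, T1.Adj (Sum.inr u) (Sum.inl (s u)) :=
    fun u => pendant_adj_leaf D.T s u
  refine ⟨⟨D.ι ⊕ V, T1, hT1, bag1, ?_, ?_, ?_⟩, ?_⟩
  · intro v
    exact ⟨Sum.inr v, by simp [hbag1]⟩
  · intro u u' huv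
    set e : G.edgeSet := ⟨s(u, u'), G.mem_edgeSet.mpr huv⟩ with he'
    have hfe : f e = u ∨ f e = u' := by
      have := hfmem e
      rw [Sym2.mem_iff] at this
      exact this
    rcases hfe with hfe | hfe
    · refine ⟨Sum.inr u', ?_, by simp [hbag1]⟩
      have hee : e ∈ D.bag (s u') := hs u' e (Sym2.mem_iff.mpr (Or.inr rfl))
      simp only [hbag1, Sum.elim_inr]
      exact Finset.mem_insert.mpr (Or.inr (Finset.mem_image.mpr ⟨e, hee, hfe⟩))
    · refine ⟨Sum.inr u, by simp [hbag1], ?_⟩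
      have hee : e ∈ D.bag (s u) := hs u e (Sym2.mem_iff.mpr (Or.inl rfl))
      simp only [hbag1, Sum.elim_inr]
      exact Finset.mem_insert.mpr (Or.inr (Finset.mem_image.mpr ⟨e, hee, hfe⟩))
  · intro v x y p hp hx hy k hk
    have hpt : p = tpath hT1 x y := eq_tpath hT1 p hp
    rw [hpt] at hk
    rcases x with i | u <;> rcases y with j | u'
    · exact seg_inl v ((hWinl v i).mp hx) ((hWinl v j).mp hy) k hk
    · have hj : s u' ∈ W v := by
        rcases (hWinr v u').mp hy with rfl | h
        · exact hWhub v i ((hWinl v i).mp hx)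
        · exact h
      rcases tpath_support_union hT1 _ _ (Sum.inl (s u')) hk with hkl | hkr
      · exact seg_inl v ((hWinl v i).mp hx) hj k hkl
      · exact seg_adj v (hleafadj u').symm ((hWinl _ _).mpr hj) hy k hkr
    · have hi : s u ∈ W v := by
        rcases (hWinr v u).mp hx with rfl | h
        · exact hWhub v j ((hWinl v j).mp hy)
        · exact h
      rcases tpath_support_union hT1 _ _ (Sum.inl (s u)) hk with hkl | hkr
      · exact seg_adj v (hleafadj u) hx ((hWinl _ _).mpr hi) k hkl
      · exact seg_inl v hi ((hWinl v j).mp hy) k hkr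
    · rcases eq_or_ne u u' with rfl | hne
      · rw [tpath_self_support] at hk
        simp only [List.mem_singleton] at hk
        rw [hk]
        exact hx
      · have hu : s u ∈ W v := by
          rcases (hWinr v u).mp hx with rfl | h
          · rcases (hWinr v u').mp hy with h' | h'
            · exact absurd h' hne
            · exact hWhub v (s u') h'
          · exact h
        have hu' : s u' ∈ W v := by
          rcases (hWinr v u').mp hy with rfl | h
          · rcases (hWinr v u).mp hx with h' | h'
            · exact absurd h'.symm hne
            · exact hWhub v (s u) h'
          · exact h
        rcases tpath_support_union hT1 _ _ (Sum.inl (s u)) hk with hkl | hkr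
        · exact seg_adj v (hleafadj u) hx ((hWinl _ _).mpr hu) k hkl
        · rcases tpath_support_union hT1 _ _ (Sum.inl (s u')) hkr with hkm | hke
          · exact seg_inl v hu hu' k hkm
          · exact seg_adj v (hleafadj u').symm ((hWinl _ _).mpr hu') hy k hke
  · rintro (i | v)
    · simp only [hbag1, Sum.elim_inl]
      have := Finset.card_image_le (s := D.bag i) (f := f)
      have := hw i
      omega
    · simp only [hbag1, Sum.elim_inr]
      have h1 := Finset.card_insert_le v ((D.bag (s v)).image f)
      have h2 := Finset.card_image_le (s := D.bag (s v)) (f := f)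
      have := hw (s v)
      omega

end Dir1

/-- For a graph `G` with at least one edge,
`Δ(G)·(tw(G)+1) ≥ tw(L(G)) + 1 ≥ tw(G)`, where `L(G)` is the line graph. -/
theorem treewidth_lineGraph_bounds {V : Type} [Fintype V] [DecidableEq V]
    (G : SimpleGraph V) [DecidableRel G.Adj] (he : ∃ u v, G.Adj u v) :
    treewidth G ≤ treewidth G.lineGraph + 1 ∧
    treewidth G.lineGraph + 1 ≤ G.maxDegree * (treewidth G + 1) := by
  classical
  have hmax : 1 ≤ G.maxDegree := by
    obtain ⟨u, v, huv⟩ := he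
    have : 0 < G.degree u := (G.degree_pos_iff_exists_adj u).mpr ⟨v, huv⟩
    exact this.trans_le (G.degree_le_maxDegree u)
  constructor
  · obtain ⟨DL, hDL⟩ := Nat.sInf_mem (tw_set_nonempty G.lineGraph)
    obtain ⟨D1, h1⟩ := dir1 G DL he (treewidth G.lineGraph) hDL
    exact Nat.sInf_le ⟨D1, fun i => h1 i⟩
  · obtain ⟨Dg, hDg⟩ := Nat.sInf_mem (tw_set_nonempty G)
    obtain ⟨D2, h2⟩ := dir2 G Dg (treewidth G) hDg
    set M := G.maxDegree * (treewidth G + 1) with hM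
    have hM1 : 1 ≤ M := by
      have : 1 * 1 ≤ M := Nat.mul_le_mul hmax (by omega)
      omega
    have hL : treewidth G.lineGraph ≤ M - 1 :=
      Nat.sInf_le ⟨D2, fun i => by have := h2 i; omega⟩
    omega
end

section
/- Let G be a graph with m edges, normalized Laplacian 𝓛 = I − D^{−1/2} A D^{−1/2} with eigenvalues 0 = μ₁ ≤ … ≤ μₙ. Then for every subset S of vertices, μ₂·Vol(S)·Vol(V\S)/(2m) ≤ e_G(S, V\S) ≤ μₙ·Vol(S)·Vol(V\S)/(2m), where Vol(S) = Σ_{v∈S} deg(v). -/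
open Matrix SimpleGraph

/-- The normalized Laplacian `𝓛 = D^{-1/2} (D − A) D^{-1/2}` of a graph. -/
noncomputable def normLap {n : ℕ} (G : SimpleGraph (Fin n)) [DecidableRel G.Adj] :
    Matrix (Fin n) (Fin n) ℝ :=
  Matrix.diagonal (fun v => (Real.sqrt (G.degree v))⁻¹) * G.lapMatrix ℝ *
    Matrix.diagonal (fun v => (Real.sqrt (G.degree v))⁻¹)

/-- The volume of a vertex subset: the sum of the degrees of its vertices. -/
def vol {n : ℕ} (G : SimpleGraph (Fin n)) [DecidableRel G.Adj] (S : Finset (Fin n)) : ℕ :=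
  ∑ v ∈ S, G.degree v

lemma specM_eq_s16 {ι : Type*} [Fintype ι] [DecidableEq ι] {M : Matrix ι ι ℝ}
    (hM : M.IsHermitian) : specM M = Finset.univ.val.map hM.eigenvalues := by
  rw [specM, dif_pos hM]

lemma sorted_countP_lt_getD_one {l : List ℝ} (hl : l.Pairwise (· ≤ ·)) :
    l.countP (fun x => decide (x < l.getD 1 0)) ≤ 1 := by
  match l, hl with
  | [], _ => simp
  | [a], _ => simpa using List.countP_le_length (p := fun x => decide (x < [a].getD 1 0)) (l := [a])
  | a :: b :: t, hl =>
    have hb : ∀ x ∈ t, b ≤ x := fun x hx =>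
      (List.pairwise_cons.mp (List.pairwise_cons.mp hl).2).1 x hx
    have h0 : (a :: b :: t).getD 1 0 = b := rfl
    rw [h0, List.countP_cons, List.countP_cons]
    have ht : t.countP (fun x => decide (x < b)) = 0 := by
      rw [List.countP_eq_zero]
      intro x hx
      simpa using not_lt.mpr (hb x hx)
    simp only [ht, decide_eq_true_eq]
    have : ¬ (b < b) := lt_irrefl b
    simp only [this, if_false]
    split_ifs <;> omega

lemma sorted_le_getD_last {l : List ℝ} (hl : l.Pairwise (· ≤ ·)) {a : ℝ} (ha : a ∈ l) :
    a ≤ l.getD (l.length - 1) 0 := by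
  obtain ⟨k, hk⟩ := List.mem_iff_get.mp ha
  have hlen : 0 < l.length := k.pos
  have hlast : l.length - 1 < l.length := by omega
  rw [List.getD_eq_getElem l 0 hlast]
  have := hl.rel_get_of_le (a := k) (b := ⟨l.length - 1, hlast⟩) (by simp [Fin.le_def]; omega)
  rw [← hk]
  simpa using this

lemma two_le_countP {n : ℕ} (f : Fin n → ℝ) (t : ℝ) {i j : Fin n} (hij : i ≠ j)
    (hi : f i < t) (hj : f j < t) :
    2 ≤ Multiset.countP (fun x => x < t) (Finset.univ.val.map f) := by
  classical
  rw [Multiset.countP_map]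
  have h1 : (Finset.univ.filter fun a => f a < t).card
      = Multiset.card (Finset.univ.val.filter fun a => f a < t) := rfl
  rw [← h1]
  have : 1 < (Finset.univ.filter fun a => f a < t).card :=
    Finset.one_lt_card.mpr ⟨i, Finset.mem_filter.mpr ⟨Finset.mem_univ _, hi⟩,
      j, Finset.mem_filter.mpr ⟨Finset.mem_univ _, hj⟩, hij⟩
  omega

lemma euclid_inner_dot {n : ℕ} (x y : EuclideanSpace ℝ (Fin n)) :
    @inner ℝ _ _ x y = (fun i => x i) ⬝ᵥ (fun i => y i) := by
  simp [PiLp.inner_apply, RCLike.inner_apply, dotProduct, mul_comm]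

set_option maxHeartbeats 1000000 in
lemma rayleigh_bounds {n : ℕ} {M : Matrix (Fin n) (Fin n) ℝ} (hM : M.PosSemidef)
    {y₀ z : Fin n → ℝ} (h0 : M *ᵥ y₀ = 0) (hy0 : y₀ ≠ 0) (horth : y₀ ⬝ᵥ z = 0) :
    (sortedSpec M).getD 1 0 * (z ⬝ᵥ z) ≤ z ⬝ᵥ (M *ᵥ z) ∧
      z ⬝ᵥ (M *ᵥ z) ≤ (sortedSpec M).getD (n - 1) 0 * (z ⬝ᵥ z) := by
  classical
  have hH := hM.isHermitian
  have hMT : Mᵀ = M := by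
    have := hH.eq
    rwa [conjTranspose_eq_transpose_of_trivial] at this
  have hswap : ∀ x w : Fin n → ℝ, x ⬝ᵥ (M *ᵥ w) = (M *ᵥ x) ⬝ᵥ w := by
    intro x w
    rw [dotProduct_mulVec, ← mulVec_transpose, hMT]
  have heig : ∀ i, M *ᵥ (fun j => hH.eigenvectorBasis i j)
      = hH.eigenvalues i • (fun j => hH.eigenvectorBasis i j) :=
    fun i => hH.mulVec_eigenvectorBasis i
  have huMz : ∀ (w : Fin n → ℝ) i, (fun j => hH.eigenvectorBasis i j) ⬝ᵥ (M *ᵥ w)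
      = hH.eigenvalues i * ((fun j => hH.eigenvectorBasis i j) ⬝ᵥ w) := by
    intro w i
    rw [hswap, heig i, smul_dotProduct]
    rfl
  have hsum2 : z ⬝ᵥ (M *ᵥ z)
      = ∑ i, hH.eigenvalues i * ((fun j => hH.eigenvectorBasis i j) ⬝ᵥ z)^2 := by
    have := hH.eigenvectorBasis.sum_inner_mul_inner (x := (WithLp.toLp 2 z))
      (y := (WithLp.toLp 2 (M *ᵥ z)))
    rw [euclid_inner_dot] at this
    rw [show ((fun i => z i) ⬝ᵥ (fun i => (M *ᵥ z) i)) = z ⬝ᵥ (M *ᵥ z) from rfl] at this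
    rw [← this]
    refine Finset.sum_congr rfl fun i _ => ?_
    rw [real_inner_comm]
    rw [euclid_inner_dot (hH.eigenvectorBasis i) (WithLp.toLp 2 z),
      euclid_inner_dot (hH.eigenvectorBasis i) (WithLp.toLp 2 (M *ᵥ z))]
    rw [show ((fun j => hH.eigenvectorBasis i j) ⬝ᵥ (fun j => (M *ᵥ z) j))
      = (fun j => hH.eigenvectorBasis i j) ⬝ᵥ (M *ᵥ z) from rfl]
    rw [huMz z i]
    ring
  have hsum1 : z ⬝ᵥ z = ∑ i, ((fun j => hH.eigenvectorBasis i j) ⬝ᵥ z)^2 := by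
    have := hH.eigenvectorBasis.sum_inner_mul_inner (x := (WithLp.toLp 2 z))
      (y := (WithLp.toLp 2 z))
    rw [euclid_inner_dot] at this
    rw [show ((fun i => z i) ⬝ᵥ (fun i => z i)) = z ⬝ᵥ z from rfl] at this
    rw [← this]
    refine Finset.sum_congr rfl fun i _ => ?_
    rw [real_inner_comm, euclid_inner_dot (hH.eigenvectorBasis i) (WithLp.toLp 2 z)]
    ring
  have horthc : ∑ i, ((fun j => hH.eigenvectorBasis i j) ⬝ᵥ y₀)
      * ((fun j => hH.eigenvectorBasis i j) ⬝ᵥ z) = 0 := by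
    have := hH.eigenvectorBasis.sum_inner_mul_inner (x := (WithLp.toLp 2 y₀))
      (y := (WithLp.toLp 2 z))
    rw [euclid_inner_dot] at this
    rw [show ((fun i => y₀ i) ⬝ᵥ (fun i => z i)) = y₀ ⬝ᵥ z from rfl, horth] at this
    rw [← this]
    refine Finset.sum_congr rfl fun i _ => ?_
    rw [real_inner_comm]
    simp only [euclid_inner_dot]
  have huMy : ∀ i, hH.eigenvalues i * ((fun j => hH.eigenvectorBasis i j) ⬝ᵥ y₀) = 0 := by
    intro i
    rw [← huMz y₀ i, h0, dotProduct_zero]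
  have hex : ∃ i₀, (fun j => hH.eigenvectorBasis i₀ j) ⬝ᵥ y₀ ≠ 0 := by
    by_contra h
    push_neg at h
    apply hy0
    have hrepr := hH.eigenvectorBasis.sum_repr' (WithLp.toLp 2 y₀)
    have : ∀ i, (inner ℝ (hH.eigenvectorBasis i) (WithLp.toLp 2 y₀) : ℝ) = 0 := by
      intro i
      rw [euclid_inner_dot (hH.eigenvectorBasis i) (WithLp.toLp 2 y₀)]
      exact h i
    rw [show (∑ i, (inner ℝ (hH.eigenvectorBasis i) (WithLp.toLp 2 y₀) : ℝ)
        • hH.eigenvectorBasis i) = 0 from Finset.sum_eq_zero fun i _ => by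
          rw [this i, zero_smul]] at hrepr
    exact congrArg WithLp.ofLp hrepr.symm
  obtain ⟨i₀, hi₀⟩ := hex
  have hlam₀ : hH.eigenvalues i₀ = 0 := by
    rcases mul_eq_zero.mp (huMy i₀) with h | h
    · exact h
    · exact absurd h hi₀
  have hlcoe : ((sortedSpec M : List ℝ) : Multiset ℝ) = Finset.univ.val.map hH.eigenvalues := by
    rw [sortedSpec, Multiset.sort_eq, specM_eq_s16 hH]
  have hsorted : (sortedSpec M).Pairwise (· ≤ ·) := Multiset.pairwise_sort _ _
  have hlen : (sortedSpec M).length = n := by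
    rw [sortedSpec, Multiset.length_sort, specM_eq_s16 hH]
    simp
  constructor
  · -- lower bound
    by_cases ht : (sortedSpec M).getD 1 0 ≤ 0
    · have h1 : 0 ≤ z ⬝ᵥ (M *ᵥ z) := by
        simpa using hM.dotProduct_mulVec_nonneg z
      have h2 : 0 ≤ z ⬝ᵥ z := by rw [hsum1]; exact Finset.sum_nonneg fun i _ => sq_nonneg _
      calc (sortedSpec M).getD 1 0 * (z ⬝ᵥ z) ≤ 0 := mul_nonpos_of_nonpos_of_nonneg ht h2
        _ ≤ _ := h1
    · push_neg at ht
      have hge : ∀ j, j ≠ i₀ → (sortedSpec M).getD 1 0 ≤ hH.eigenvalues j := by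
        intro j hj
        by_contra h
        push_neg at h
        have h2 : 2 ≤ Multiset.countP (fun x => x < (sortedSpec M).getD 1 0)
            (Finset.univ.val.map hH.eigenvalues) :=
          two_le_countP _ _ hj h (by rw [hlam₀]; exact ht)
        have h1 : Multiset.countP (fun x => x < (sortedSpec M).getD 1 0)
            (Finset.univ.val.map hH.eigenvalues) ≤ 1 := by
          rw [← hlcoe, Multiset.coe_countP]
          exact sorted_countP_lt_getD_one hsorted
        omega
      have hc₀ : (fun j => hH.eigenvectorBasis i₀ j) ⬝ᵥ z = 0 := by
        have hdz : ∀ j, j ≠ i₀ → (fun k => hH.eigenvectorBasis j k) ⬝ᵥ y₀ = 0 := by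
          intro j hj
          by_contra h
          have hl0 : hH.eigenvalues j = 0 := by
            rcases mul_eq_zero.mp (huMy j) with h' | h'
            · exact h'
            · exact absurd h' h
          have := hge j hj
          rw [hl0] at this
          linarith
        have h1 := horthc
        rw [Finset.sum_eq_single i₀ (fun j _ hj => by rw [hdz j hj, zero_mul])
          (fun h => absurd (Finset.mem_univ i₀) h)] at h1
        rcases mul_eq_zero.mp h1 with h | h
        · exact absurd h hi₀
        · exact h
      rw [hsum1, hsum2, Finset.mul_sum]
      refine Finset.sum_le_sum fun i _ => ?_
      by_cases hii : i = i₀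
      · subst hii
        rw [hc₀]
        simp
      · exact mul_le_mul_of_nonneg_right (hge i hii) (sq_nonneg _)
  · -- upper bound
    have hmax : ∀ i, hH.eigenvalues i ≤ (sortedSpec M).getD (n - 1) 0 := by
      intro i
      have hm : hH.eigenvalues i ∈ sortedSpec M := by
        have : hH.eigenvalues i ∈ ((sortedSpec M : List ℝ) : Multiset ℝ) := by
          rw [hlcoe]
          exact Multiset.mem_map.mpr ⟨i, by simp, rfl⟩
        exact Multiset.mem_coe.mp this
      have := sorted_le_getD_last hsorted hm
      rwa [hlen] at this
    rw [hsum1, hsum2, Finset.mul_sum]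
    exact Finset.sum_le_sum fun i _ => mul_le_mul_of_nonneg_right (hmax i) (sq_nonneg _)

lemma cut_identity {n : ℕ} (G : SimpleGraph (Fin n)) [DecidableRel G.Adj] (S : Finset (Fin n)) :
    (∑ i : Fin n, ∑ j : Fin n,
      if G.Adj i j then ((if i ∈ S then (1:ℝ) else 0) - (if j ∈ S then 1 else 0))^2 else (0:ℝ))
      = 2 * cutSize G S := by
  classical
  have hpt : ∀ i j : Fin n,
      (if G.Adj i j then ((if i ∈ S then (1:ℝ) else 0) - (if j ∈ S then 1 else 0))^2 else (0:ℝ))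
      = (if G.Adj i j ∧ i ∈ S ∧ j ∉ S then (1:ℝ) else 0)
        + (if G.Adj j i ∧ j ∈ S ∧ i ∉ S then 1 else 0) := by
    intro i j
    by_cases ha : G.Adj i j
    · have ha' : G.Adj j i := ha.symm
      by_cases hi : i ∈ S <;> by_cases hj : j ∈ S <;> simp [ha, ha', hi, hj]
    · have ha' : ¬ G.Adj j i := fun h => ha h.symm
      simp [ha, ha']
  simp_rw [hpt, Finset.sum_add_distrib]
  have hswap : (∑ i : Fin n, ∑ j : Fin n, if G.Adj j i ∧ j ∈ S ∧ i ∉ S then (1:ℝ) else 0)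
      = ∑ i : Fin n, ∑ j : Fin n, if G.Adj i j ∧ i ∈ S ∧ j ∉ S then (1:ℝ) else 0 :=
    Finset.sum_comm
  rw [hswap]
  have hcard : (∑ i : Fin n, ∑ j : Fin n, if G.Adj i j ∧ i ∈ S ∧ j ∉ S then (1:ℝ) else 0)
      = cutSize G S := by
    rw [← Finset.sum_product']
    rw [cutSize]
    rw [← Finset.sum_boole]
    rw [← Finset.univ_product_univ]
  rw [hcard]
  ring

/-- Cheeger-type bounds for the normalized Laplacian: for a graph with no
isolated vertices and `m` edges, and for every vertex subset `S`,
`μ₂·Vol(S)·Vol(V∖S)/(2m) ≤ e_G(S, V∖S) ≤ μₙ·Vol(S)·Vol(V∖S)/(2m)`. -/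
theorem normalized_cheeger_bounds {n : ℕ} (G : SimpleGraph (Fin n)) [DecidableRel G.Adj]
    (hd : ∀ v, 0 < G.degree v) (S : Finset (Fin n)) :
    (sortedSpec (normLap G)).getD 1 0 * vol G S * vol G Sᶜ / (2 * G.edgeFinset.card) ≤
      (cutSize G S : ℝ) ∧
    (cutSize G S : ℝ) ≤
      (sortedSpec (normLap G)).getD (n - 1) 0 * vol G S * vol G Sᶜ /
        (2 * G.edgeFinset.card) := by
  classical
  rcases Nat.eq_zero_or_pos n with rfl | hn
  · have hv : vol G S = 0 := Finset.sum_eq_zero fun v _ => v.elim0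
    have hc : cutSize G S = 0 := by
      rw [cutSize, Finset.univ_eq_empty, Finset.filter_empty, Finset.card_empty]
    rw [hv, hc]
    norm_num
  -- positive case
  have hdpos : ∀ v, (0:ℝ) < (G.degree v : ℝ) := fun v => by exact_mod_cast hd v
  set s : Fin n → ℝ := fun v => Real.sqrt (G.degree v) with hs_def
  have hspos : ∀ v, 0 < s v := fun v => Real.sqrt_pos.mpr (hdpos v)
  have hss : ∀ v, s v * s v = (G.degree v : ℝ) :=
    fun v => Real.mul_self_sqrt (le_of_lt (hdpos v))
  set χ : Fin n → ℝ := fun v => if v ∈ S then (1:ℝ) else 0 with hχ_def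
  set y : Fin n → ℝ := fun v => χ v * s v with hy_def
  set m2 : ℝ := 2 * (G.edgeFinset.card : ℝ) with hm2_def
  have hsum_deg : ∑ v, (G.degree v : ℝ) = m2 := by
    rw [hm2_def]
    exact_mod_cast G.sum_degrees_eq_twice_card_edges
  have hm2pos : 0 < m2 := by
    rw [← hsum_deg]
    exact Finset.sum_pos (fun v _ => hdpos v) ⟨⟨0, hn⟩, Finset.mem_univ _⟩
  have hdot_ss : s ⬝ᵥ s = m2 := by
    rw [dotProduct, ← hsum_deg]
    exact Finset.sum_congr rfl fun v _ => hss v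
  have hvolS : (vol G S : ℝ) = ∑ v ∈ S, (G.degree v : ℝ) := by
    rw [vol]; push_cast; rfl
  have hdot_ys : y ⬝ᵥ s = (vol G S : ℝ) := by
    rw [dotProduct, hvolS]
    rw [← Finset.sum_filter_add_sum_filter_not Finset.univ (· ∈ S) (fun v => y v * s v)]
    have h2 : ∑ v ∈ Finset.univ.filter (· ∉ S), y v * s v = 0 :=
      Finset.sum_eq_zero fun v hv => by
        have : v ∉ S := (Finset.mem_filter.mp hv).2
        simp [hy_def, hχ_def, this]
    rw [h2, add_zero]
    have h3 : Finset.univ.filter (· ∈ S) = S := by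
      ext v; simp
    rw [h3]
    refine Finset.sum_congr rfl fun v hv => ?_
    simp [hy_def, hχ_def, hv, mul_assoc, hss v]
  have hdot_yy : y ⬝ᵥ y = (vol G S : ℝ) := by
    rw [← hdot_ys, dotProduct, dotProduct]
    refine Finset.sum_congr rfl fun v _ => ?_
    by_cases hv : v ∈ S <;> simp [hy_def, hχ_def, hv]
  have hdot_sy : s ⬝ᵥ y = (vol G S : ℝ) := by
    rw [dotProduct_comm]; exact hdot_ys
  have hvol_compl : (vol G S : ℝ) + (vol G Sᶜ : ℝ) = m2 := by
    have : (vol G Sᶜ : ℝ) = ∑ v ∈ Sᶜ, (G.degree v : ℝ) := by rw [vol]; push_cast; rfl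
    rw [hvolS, this, Finset.sum_add_sum_compl, hsum_deg]
  -- mulVec computations
  have hmulvec : ∀ x : Fin n → ℝ, normLap G *ᵥ x
      = fun v => (s v)⁻¹ * ((G.lapMatrix ℝ *ᵥ (fun w => (s w)⁻¹ * x w)) v) := by
    intro x
    rw [normLap, ← mulVec_mulVec, ← mulVec_mulVec]
    funext v
    rw [mulVec_diagonal]
    congr 1
    congr 1
    funext w
    rw [mulVec_diagonal]
  have hLs : normLap G *ᵥ s = 0 := by
    rw [hmulvec]
    have h1 : (fun w => (s w)⁻¹ * s w) = fun _ => (1:ℝ) := by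
      funext w
      exact inv_mul_cancel₀ (ne_of_gt (hspos w))
    rw [h1, G.lapMatrix_mulVec_const_eq_zero]
    funext v
    simp
  have hsinv_y : (fun w => (s w)⁻¹ * y w) = χ := by
    funext w
    rw [hy_def]
    field_simp [ne_of_gt (hspos w)]
  have hquad_y : y ⬝ᵥ (normLap G *ᵥ y) = (cutSize G S : ℝ) := by
    rw [hmulvec, hsinv_y]
    have h1 : y ⬝ᵥ (fun v => (s v)⁻¹ * (G.lapMatrix ℝ *ᵥ χ) v)
        = χ ⬝ᵥ (G.lapMatrix ℝ *ᵥ χ) := by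
      rw [dotProduct, dotProduct]
      refine Finset.sum_congr rfl fun v _ => ?_
      rw [hy_def]
      field_simp [ne_of_gt (hspos v)]
    rw [h1, ← Matrix.toLinearMap₂'_apply', G.lapMatrix_toLinearMap₂' (R := ℝ)]
    rw [hχ_def]
    rw [cut_identity G S]
    ring
  -- symmetry
  have hpsd : (normLap G).PosSemidef := by
    have h := (posSemidef_lapMatrix ℝ G).mul_mul_conjTranspose_same
      (Matrix.diagonal (fun v => (Real.sqrt (G.degree v))⁻¹))
    have hdiag : (Matrix.diagonal (fun v => (Real.sqrt (G.degree v))⁻¹))ᴴ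
        = Matrix.diagonal (fun v => (Real.sqrt (G.degree v))⁻¹) := by
      rw [Matrix.diagonal_conjTranspose]
      simp
    rw [hdiag] at h
    rw [normLap]
    exact h
  have hMT : (normLap G)ᵀ = normLap G := by
    have := hpsd.isHermitian.eq
    rwa [conjTranspose_eq_transpose_of_trivial] at this
  have hswap : ∀ x w : Fin n → ℝ, x ⬝ᵥ (normLap G *ᵥ w) = (normLap G *ᵥ x) ⬝ᵥ w := by
    intro x w
    rw [dotProduct_mulVec, ← mulVec_transpose, hMT]
  -- the test vector
  set α : ℝ := (vol G S : ℝ) / m2 with hα_def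
  set z : Fin n → ℝ := y - α • s with hz_def
  have horth : s ⬝ᵥ z = 0 := by
    rw [hz_def, dotProduct_sub, dotProduct_smul, hdot_sy, hdot_ss, hα_def, smul_eq_mul]
    field_simp
    ring
  have hzz : z ⬝ᵥ z = (vol G S : ℝ) * (vol G Sᶜ : ℝ) / m2 := by
    rw [hz_def, dotProduct_sub, sub_dotProduct, sub_dotProduct, dotProduct_smul,
      smul_dotProduct, smul_dotProduct, dotProduct_smul, hdot_yy, hdot_ys, hdot_sy, hdot_ss,
      hα_def]
    have hvc : (vol G Sᶜ : ℝ) = m2 - (vol G S : ℝ) := by linarith [hvol_compl]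
    rw [hvc]
    field_simp [hm2pos.ne']
    linear_combination ((vol G S : ℝ) ^ 2 * (m2 * m2⁻¹ - 1)) * mul_inv_cancel₀ hm2pos.ne'
  have hquad_z : z ⬝ᵥ (normLap G *ᵥ z) = (cutSize G S : ℝ) := by
    have h1 : normLap G *ᵥ z = normLap G *ᵥ y := by
      rw [hz_def, mulVec_sub, mulVec_smul, hLs]
      simp
    rw [h1, hz_def, sub_dotProduct, smul_dotProduct, hswap s, hLs]
    rw [hquad_y]
    simp
  have hsne : s ≠ 0 := by
    intro h
    have := hspos ⟨0, hn⟩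
    rw [h] at this
    simp at this
  have hbounds := rayleigh_bounds hpsd hLs hsne horth
  rw [hzz, hquad_z] at hbounds
  constructor
  · have h := hbounds.1
    have heq : (sortedSpec (normLap G)).getD 1 0 * (vol G S : ℝ) * (vol G Sᶜ : ℝ) / m2
        = (sortedSpec (normLap G)).getD 1 0 * ((vol G S : ℝ) * (vol G Sᶜ : ℝ) / m2) := by
      ring
    rw [hm2_def] at heq
    rw [heq]
    rw [← hm2_def]
    exact h
  · have h := hbounds.2
    have heq : (sortedSpec (normLap G)).getD (n - 1) 0 * (vol G S : ℝ) * (vol G Sᶜ : ℝ) / m2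
        = (sortedSpec (normLap G)).getD (n - 1) 0 * ((vol G S : ℝ) * (vol G Sᶜ : ℝ) / m2) := by
      ring
    rw [hm2_def] at heq
    rw [heq]
    rw [← hm2_def]
    exact h
end
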